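/- Let 1 < p < ∞, q = p/(p−1), and let a : ℕ → ℝ with ā_k = Σ_{j=k}^∞ (f_{j+1}^2/(f_k f_{k+1})) a_j absolutely convergent for each k and ā ∈ ℓ_q. Then sup over x in the unit sphere of ℓ_p(F̂) of |Σ_k a_k x_k| equals (Σ_k |ā_k|^q)^{1/q}. -/

import Mathlib

open scoped BigOperators ENNReal
open Filter Topology

noncomputable def fibr (n : ℕ) : ℝ := (Nat.fib (n + 1) : ℝ)

lemma fibr_pos (n : ℕ) : 0 < fibr n := by
  simpa [fibr] using Nat.cast_pos.mpr (Nat.fib_pos.mpr (Nat.succ_pos n))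

noncomputable def Fhat (x : ℕ → ℝ) : ℕ → ℝ
  | 0 => x 0
  | (n + 1) => fibr (n + 1) / fibr (n + 2) * x (n + 1) - fibr (n + 2) / fibr (n + 1) * x n

lemma Fhat_add (x y : ℕ → ℝ) : Fhat (x + y) = Fhat x + Fhat y := by
  funext n; cases n <;> simp [Fhat] <;> ring

lemma Fhat_smul (c : ℝ) (x : ℕ → ℝ) : Fhat (c • x) = c • Fhat x := by
  funext n; cases n <;> simp [Fhat] <;> ring

noncomputable def FhatL : (ℕ → ℝ) →ₗ[ℝ] (ℕ → ℝ) where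
  toFun := Fhat
  map_add' := Fhat_add
  map_smul' := Fhat_smul

lemma Fhat_inj : Function.Injective Fhat := by
  have h0 : ∀ x : ℕ → ℝ, Fhat x = 0 → x = 0 := by
    intro x hx
    funext n
    induction n with
    | zero => simpa [Fhat] using congrFun hx 0
    | succ n ih =>
        have h := congrFun hx (n + 1)
        simp only [Fhat, ih, Pi.zero_apply, mul_zero, sub_zero] at h
        have h1 : fibr (n + 1) / fibr (n + 2) ≠ 0 :=
          div_ne_zero (fibr_pos _).ne' (fibr_pos _).ne'
        simpa [Pi.zero_apply] using (mul_eq_zero.mp h).resolve_left h1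
  have : Function.Injective FhatL := (injective_iff_map_eq_zero' FhatL).mpr
    (fun x => ⟨fun h => h0 x h, fun h => by simp [FhatL, h]; funext n; cases n <;> simp [Fhat]⟩)
  exact this

noncomputable def FhatLP : PreLp (fun _ : ℕ => ℝ) →ₗ[ℝ] PreLp (fun _ : ℕ => ℝ) where
  toFun x := Fhat x
  map_add' x y := Fhat_add x y
  map_smul' c x := Fhat_smul c x

noncomputable def ellF (p : ℝ≥0∞) : Submodule ℝ (PreLp (fun _ : ℕ => ℝ)) :=
  (lpSubmodule ℝ (fun _ : ℕ => ℝ) p).comap FhatLP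

instance (p : ℝ≥0∞) : CoeOut (ellF p) (ℕ → ℝ) := ⟨fun x => (x : PreLp (fun _ : ℕ => ℝ))⟩

noncomputable def ellFtoLp (p : ℝ≥0∞) : ellF p →ₗ[ℝ] lp (fun _ : ℕ => ℝ) p where
  toFun x := ⟨Fhat (x : ℕ → ℝ), x.2⟩
  map_add' x y := Subtype.ext (Fhat_add (x : ℕ → ℝ) (y : ℕ → ℝ))
  map_smul' c x := Subtype.ext (Fhat_smul c (x : ℕ → ℝ))

lemma ellFtoLp_inj (p : ℝ≥0∞) : Function.Injective (ellFtoLp p) := by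
  intro x y h
  have h2 : Fhat (x : ℕ → ℝ) = Fhat (y : ℕ → ℝ) := congrArg Subtype.val h
  exact Subtype.ext (Fhat_inj h2)

noncomputable instance (p : ℝ≥0∞) [Fact (1 ≤ p)] : NormedAddCommGroup (ellF p) :=
  NormedAddCommGroup.induced _ _ (ellFtoLp p) (ellFtoLp_inj p)

noncomputable instance (p : ℝ≥0∞) [Fact (1 ≤ p)] : NormedSpace ℝ (ellF p) :=
  NormedSpace.induced _ _ _ (ellFtoLp p)

noncomputable def abar (a : ℕ → ℝ) (k : ℕ) : ℝ :=
  ∑' j : ℕ, (fibr (k + j + 1)) ^ 2 / (fibr k * fibr (k + 1)) * a (k + j)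

noncomputable def hmnc {X : Type*} [MetricSpace X] (Q : Set X) : ℝ :=
  sInf {ε : ℝ | 0 < ε ∧ ∃ s : Finset X, Q ⊆ ⋃ x ∈ s, Metric.ball x ε}

/-!
Forward substitution inverts `Fhat`, so `x ↦ Fhat x` is an isometry of `ℓ_p(F̂)` onto `ℓ_p`.
Through the representation `∑ a_k x_k = ∑ ā_k (F̂x)_k` the supremum becomes the norm of the
functional `y ↦ ∑ ā_k y_k` on `ℓ_p`, and this norm is `‖ā‖_q`: Hölder's inequality bounds it
from above and its equality case provides a unit vector attaining the bound.
-/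

namespace Real

lemma abs_sign_mul_abs_rpow (r : ℝ) {s : ℝ} (hs : s ≠ 0) : |sign r * |r| ^ s| = |r| ^ s := by
  rcases lt_trichotomy r 0 with h | rfl | h
  · rw [sign_of_neg h, neg_one_mul, abs_neg, abs_of_nonneg (by positivity)]
  · simp [zero_rpow hs]
  · rw [sign_of_pos h, one_mul, abs_of_nonneg (by positivity)]

lemma mul_sign_mul_abs_rpow (r : ℝ) {s : ℝ} (hs : s + 1 ≠ 0) :
    r * (sign r * |r| ^ s) = |r| ^ (s + 1) := by
  rcases eq_or_ne r 0 with rfl | h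
  · simp [zero_rpow hs]
  have hsign : r * sign r = |r| := by
    rcases lt_or_gt_of_ne h with h | h
    · rw [sign_of_neg h, abs_of_neg h]; ring
    · rw [sign_of_pos h, abs_of_pos h, mul_one]
  rw [← mul_assoc, hsign, rpow_add (abs_pos.2 h), rpow_one, mul_comm]

end Real

namespace lp

variable {ι : Type*} {p q : ℝ≥0∞}

lemma abs_tsum_mul_le_norm_mul_norm (hpq : p.toReal.HolderConjugate q.toReal)
    (y : lp (fun _ : ι => ℝ) p) (b : lp (fun _ : ι => ℝ) q) :
    |∑' i, b i * y i| ≤ ‖y‖ * ‖b‖ := by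
  have hsum : Summable fun i => ‖b i * y i‖ := by
    simpa only [norm_mul, mul_comm] using lp.summable_mul hpq y b
  calc |∑' i, b i * y i| ≤ ∑' i, ‖b i * y i‖ := norm_tsum_le_tsum_norm hsum
    _ = ∑' i, ‖y i‖ * ‖b i‖ := by simp only [norm_mul, mul_comm]
    _ ≤ ‖y‖ * ‖b‖ := lp.tsum_mul_le_mul_norm' hpq y b

/-- The norming vector of `b`: `y i = sign (b i) |b i| ^ (q - 1) / ‖b‖ ^ (q - 1)`, the equality
case of Hölder's inequality. -/
lemma exists_norm_eq_one_tsum_mul_eq_norm [Fact (1 ≤ q)] [Nonempty ι]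
    (hpq : p.toReal.HolderConjugate q.toReal) (b : lp (fun _ : ι => ℝ) q) :
    ∃ y : lp (fun _ : ι => ℝ) p, ‖y‖ = 1 ∧ ∑' i, b i * y i = ‖b‖ := by
  rcases eq_or_ne b 0 with rfl | hb
  · classical
    obtain ⟨i⟩ := ‹Nonempty ι›
    refine ⟨lp.single p i 1, ?_, by simp⟩
    rw [lp.norm_single (ENNReal.toReal_pos_iff.1 hpq.pos).1, norm_one]
  set r := q.toReal
  have hr : 1 < r := hpq.symm.lt
  have hb' : 0 < ‖b‖ := norm_pos_iff.2 hb
  have hbq : ∑' i, |b i| ^ r = ‖b‖ ^ r := by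
    simpa only [Real.norm_eq_abs] using (lp.norm_rpow_eq_tsum hpq.symm.pos b).symm
  set g : ι → ℝ := fun i => Real.sign (b i) * |b i| ^ (r - 1) / ‖b‖ ^ (r - 1)
  have hg : ∀ i, |g i| ^ p.toReal = |b i| ^ r / ‖b‖ ^ r := by
    intro i
    have hgi : |g i| = |b i| ^ (r - 1) / ‖b‖ ^ (r - 1) := by
      rw [abs_div, Real.abs_sign_mul_abs_rpow _ (by linarith),
        abs_of_pos (Real.rpow_pos_of_pos hb' _)]
    rw [hgi, Real.div_rpow (by positivity) (by positivity), ← Real.rpow_mul (abs_nonneg _),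
      ← Real.rpow_mul hb'.le, hpq.symm.sub_one_mul_conj]
  have hgsum : HasSum (fun i => |g i| ^ p.toReal) 1 := by
    rw [funext hg, ← div_self (by positivity : ‖b‖ ^ r ≠ 0)]
    simpa only [Real.norm_eq_abs] using (lp.hasSum_norm hpq.symm.pos b).div_const (‖b‖ ^ r)
  have hgmem : Memℓp g p := memℓp_gen (by simpa only [Real.norm_eq_abs] using hgsum.summable)
  refine ⟨⟨g, hgmem⟩, ?_, ?_⟩
  · rw [lp.norm_eq_tsum_rpow hpq.pos]
    change (∑' i, ‖g i‖ ^ p.toReal) ^ (1 / p.toReal) = 1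
    simp only [Real.norm_eq_abs, hgsum.tsum_eq, Real.one_rpow]
  · calc ∑' i, b i * g i = ∑' i, |b i| ^ r / ‖b‖ ^ (r - 1) := by
          refine tsum_congr fun i => ?_
          rw [mul_div_assoc', Real.mul_sign_mul_abs_rpow _ (by linarith), sub_add_cancel]
      _ = ‖b‖ := by
          rw [tsum_div_const, hbq, Real.rpow_sub hb', Real.rpow_one]
          field_simp

lemma sSup_abs_tsum_mul_eq_norm [Fact (1 ≤ q)] [Nonempty ι]
    (hpq : p.toReal.HolderConjugate q.toReal) (b : lp (fun _ : ι => ℝ) q) :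
    sSup {c : ℝ | ∃ y : lp (fun _ : ι => ℝ) p, ‖y‖ = 1 ∧ c = |∑' i, b i * y i|} = ‖b‖ := by
  refine IsGreatest.csSup_eq ⟨?_, ?_⟩
  · obtain ⟨y, hy, hyb⟩ := exists_norm_eq_one_tsum_mul_eq_norm hpq b
    exact ⟨y, hy, by rw [hyb, abs_norm]⟩
  · rintro c ⟨y, hy, rfl⟩
    simpa [hy] using abs_tsum_mul_le_norm_mul_norm hpq y b

end lp

noncomputable def Finv (y : ℕ → ℝ) : ℕ → ℝ
  | 0 => y 0
  | (n + 1) =>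
      fibr (n + 2) / fibr (n + 1) * (y (n + 1) + fibr (n + 2) / fibr (n + 1) * Finv y n)

lemma Fhat_Finv (y : ℕ → ℝ) : Fhat (Finv y) = y := by
  funext n
  cases n with
  | zero => rfl
  | succ n =>
    have h1 := (fibr_pos (n + 1)).ne'
    have h2 := (fibr_pos (n + 2)).ne'
    simp only [Fhat, Finv]
    field_simp
    ring

lemma ellFtoLp_surjective (p : ℝ≥0∞) : Function.Surjective (ellFtoLp p) := fun y =>
  ⟨⟨Finv y, show Fhat (Finv y) ∈ lpSubmodule ℝ (fun _ : ℕ => ℝ) p by rw [Fhat_Finv]; exact y.2⟩,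
    Subtype.ext (Fhat_Finv y)⟩

theorem stmt7_general (p q : ℝ) (hp : 1 < p) (hq : q = p / (p - 1)) [Fact (1 ≤ ENNReal.ofReal p)]
    (a : ℕ → ℝ)
    (habar : Summable fun k : ℕ => |abar a k| ^ q)
    (hrep : ∀ x : ellF (ENNReal.ofReal p), Summable (fun k : ℕ => a k * (x : ℕ → ℝ) k) ∧
      ∑' k : ℕ, a k * (x : ℕ → ℝ) k = ∑' k : ℕ, abar a k * Fhat (x : ℕ → ℝ) k) :
    sSup {c : ℝ | ∃ x : ellF (ENNReal.ofReal p), ‖x‖ = 1 ∧ c = |∑' k : ℕ, a k * (x : ℕ → ℝ) k|} =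
      (∑' k : ℕ, |abar a k| ^ q) ^ (1 / q) := by
  have hpq : p.HolderConjugate q := (Real.holderConjugate_iff_eq_conjExponent hp).2 hq
  have hp' : (ENNReal.ofReal p).toReal = p := ENNReal.toReal_ofReal hpq.nonneg
  have hq' : (ENNReal.ofReal q).toReal = q := ENNReal.toReal_ofReal hpq.symm.nonneg
  have : Fact (1 ≤ ENNReal.ofReal q) := ⟨ENNReal.one_le_ofReal.2 hpq.symm.lt.le⟩
  let A : lp (fun _ : ℕ => ℝ) (ENNReal.ofReal q) :=
    ⟨abar a, memℓp_gen (by simpa only [Real.norm_eq_abs, hq'] using habar)⟩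
  have hset : {c : ℝ | ∃ x : ellF (ENNReal.ofReal p), ‖x‖ = 1 ∧
        c = |∑' k : ℕ, a k * (x : ℕ → ℝ) k|} =
      {c : ℝ | ∃ y : lp (fun _ : ℕ => ℝ) (ENNReal.ofReal p), ‖y‖ = 1 ∧
        c = |∑' k, A k * y k|} := by
    ext c
    constructor
    · rintro ⟨x, hx, rfl⟩
      exact ⟨ellFtoLp _ x, hx, by rw [(hrep x).2]; rfl⟩
    · rintro ⟨y, hy, rfl⟩
      obtain ⟨x, rfl⟩ := ellFtoLp_surjective _ y
      exact ⟨x, hy, by rw [(hrep x).2]; rfl⟩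
  rw [hset, lp.sSup_abs_tsum_mul_eq_norm (by rwa [hp', hq']) A,
    lp.norm_eq_tsum_rpow (by rw [hq']; exact hpq.symm.pos), hq']
  rfl

theorem stmt7 (p q : ℝ) (hp : 1 < p) (hq : q = p / (p - 1)) [Fact (1 ≤ ENNReal.ofReal p)]
    (a : ℕ → ℝ)
    (ha : ∀ k : ℕ, Summable fun j : ℕ => |fibr (k + j + 1) ^ 2 / (fibr k * fibr (k + 1)) * a (k + j)|)
    (habar : Summable fun k : ℕ => |abar a k| ^ q)
    (hrep : ∀ x : ellF (ENNReal.ofReal p), Summable (fun k : ℕ => a k * (x : ℕ → ℝ) k) ∧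
      ∑' k : ℕ, a k * (x : ℕ → ℝ) k = ∑' k : ℕ, abar a k * Fhat (x : ℕ → ℝ) k) :
    sSup {c : ℝ | ∃ x : ellF (ENNReal.ofReal p), ‖x‖ = 1 ∧ c = |∑' k : ℕ, a k * (x : ℕ → ℝ) k|} =
      (∑' k : ℕ, |abar a k| ^ q) ^ (1 / q) :=
  stmt7_general p q hp hq a habar hrep
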